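/- Let b be a prime, m ∈ ℕ, N = b^m, α > 1. Then Σ over positive integers k divisible by N of b^{-α⌊log_b k⌋} equals μ(α)/b^{mα}, where μ(α) = b^α(b-1)/(b^α - b); in particular this sum is at most μ(α)/N. -/

import Mathlib

/-- `μ(α) = b^α (b-1) / (b^α - b)`. -/
noncomputable def mu (b : ℕ) (α : ℝ) : ℝ := (b : ℝ) ^ α * ((b : ℝ) - 1) / ((b : ℝ) ^ α - b)

/-!
Writing `k = b^m j` gives `⌊log_b k⌋ = m + ⌊log_b j⌋`, so the sum over the multiples of `b^m`
is `b^{-mα}` times the sum over all `j ≥ 1`. That sum is computed blockwise: the `b^{n+1} - b^n`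
integers of `[b^n, b^{n+1})` each contribute `b^{-αn}`, which turns it into the geometric series
`(b - 1) Σ (b^{1-α})^n = μ(α)`. The bound follows from `μ(α) ≥ 0` and `b^m ≤ b^{mα}`.
-/

open Filter Topology Finset

theorem Nat.log_pow_mul {b : ℕ} (hb : 1 < b) (m : ℕ) {j : ℕ} (hj : j ≠ 0) :
    Nat.log b (b ^ m * j) = m + Nat.log b j := by
  induction m with
  | zero => simp
  | succ m ih =>
    rw [pow_succ, mul_right_comm, Nat.log_mul_base hb (by positivity), ih]
    ring

theorem hasSum_of_tendsto_sum_range_comp {f : ℕ → ℝ} (hf : ∀ i, 0 ≤ f i) {φ : ℕ → ℕ}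
    (hφ : Tendsto φ atTop atTop) {a : ℝ}
    (h : Tendsto (fun n ↦ ∑ i ∈ range (φ n), f i) atTop (𝓝 a)) : HasSum f a :=
  (hasSum_iff_tendsto_nat_of_nonneg hf a).2 <|
    (tendsto_iff_tendsto_subseq_of_monotone
      ((sum_mono_set_of_nonneg hf).comp range_mono) hφ).2 h

theorem mu_eq_mul_inv {b : ℕ} (hb : 0 < b) (α : ℝ) :
    mu b α = ((b : ℝ) - 1) * (1 - (b : ℝ) ^ (1 - α))⁻¹ := by
  have hb' : (0 : ℝ) < b := by exact_mod_cast hb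
  rw [mu, Real.rpow_sub hb', Real.rpow_one, one_sub_div (Real.rpow_pos_of_pos hb' α).ne', inv_div]
  ring

noncomputable def floorLogWeight (b : ℕ) (α : ℝ) (k : ℕ) : ℝ :=
  if k ≠ 0 then (b : ℝ) ^ (-(α * (Nat.log b k : ℝ))) else 0

namespace floorLogWeight

variable {b : ℕ} {α : ℝ}

theorem nonneg (k : ℕ) : 0 ≤ floorLogWeight b α k := by
  unfold floorLogWeight
  split_ifs
  exacts [Real.rpow_nonneg b.cast_nonneg _, le_rfl]

theorem of_mem_Ico {n k : ℕ} (hk : k ∈ Ico (b ^ n) (b ^ (n + 1))) :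
    floorLogWeight b α k = (b : ℝ) ^ (-(α * n)) := by
  obtain ⟨hlo, hhi⟩ := mem_Ico.1 hk
  have hk0 : k ≠ 0 := by
    rintro rfl
    simp_all [pow_succ]
  simp [floorLogWeight, hk0, Nat.log_eq_of_pow_le_of_lt_pow hlo hhi]

theorem pow_mul (hb : 1 < b) (m j : ℕ) :
    floorLogWeight b α (b ^ m * j) = (b : ℝ) ^ (-(m * α)) * floorLogWeight b α j := by
  have hb' : (0 : ℝ) < b := by positivity
  rcases eq_or_ne j 0 with rfl | hj
  · simp [floorLogWeight]
  · have hbj : b ^ m * j ≠ 0 := by positivity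
    simp only [floorLogWeight, ne_eq, hbj, hj, not_false_eq_true, if_true, Nat.log_pow_mul hb m hj,
      ← Real.rpow_add hb']
    push_cast
    ring_nf

theorem sum_Ico_pow (hb : 0 < b) (n : ℕ) :
    ∑ k ∈ Ico (b ^ n) (b ^ (n + 1)), floorLogWeight b α k
      = ((b : ℝ) - 1) * ((b : ℝ) ^ (1 - α)) ^ n := by
  have hb' : (0 : ℝ) < b := by exact_mod_cast hb
  have hle : b ^ n ≤ b ^ (n + 1) := Nat.pow_le_pow_right hb n.le_succ
  rw [sum_congr rfl fun k hk ↦ of_mem_Ico hk, sum_const, Nat.card_Ico, nsmul_eq_mul,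
    Nat.cast_sub hle, ← Real.rpow_natCast _ n, ← Real.rpow_mul hb'.le]
  push_cast
  rw [show (1 - α) * n = n + -(α * n) by ring, Real.rpow_add hb', Real.rpow_natCast]
  ring

theorem sum_range_pow (hb : 0 < b) (n : ℕ) :
    ∑ k ∈ range (b ^ n), floorLogWeight b α k
      = ((b : ℝ) - 1) * ∑ i ∈ range n, ((b : ℝ) ^ (1 - α)) ^ i := by
  induction n with
  | zero => simp [floorLogWeight]
  | succ n ih =>
    rw [← sum_range_add_sum_Ico _ (Nat.pow_le_pow_right hb n.le_succ), ih, sum_Ico_pow hb,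
      sum_range_succ, mul_add]

theorem hasSum_mu (hb : 1 < b) (hα : 1 < α) : HasSum (floorLogWeight b α) (mu b α) := by
  have hb' : (1 : ℝ) < b := by exact_mod_cast hb
  have hratio : (b : ℝ) ^ (1 - α) < 1 := Real.rpow_lt_one_of_one_lt_of_neg hb' (by linarith)
  have hgeom := hasSum_geometric_of_lt_one (Real.rpow_nonneg (by positivity) _) hratio
  refine hasSum_of_tendsto_sum_range_comp nonneg (tendsto_pow_atTop_atTop_of_one_lt hb) ?_
  simp_rw [sum_range_pow (Nat.zero_lt_of_lt hb), mu_eq_mul_inv (Nat.zero_lt_of_lt hb)]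
  exact hgeom.tendsto_sum_nat.const_mul _

theorem hasSum_multiples (hb : 1 < b) (hα : 1 < α) (m : ℕ) :
    HasSum (fun k ↦ if b ^ m ∣ k then floorLogWeight b α k else 0)
      (mu b α / (b : ℝ) ^ ((m : ℝ) * α)) := by
  have hinj : Function.Injective (b ^ m * ·) := mul_right_injective₀ (by positivity)
  refine (hinj.hasSum_iff fun k hk ↦ if_neg fun ⟨j, hj⟩ ↦ hk ⟨j, hj.symm⟩).1 ?_
  rw [div_eq_inv_mul, ← Real.rpow_neg (by positivity)]
  simpa [Function.comp_def, pow_mul hb] using (hasSum_mu hb hα).mul_left _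

end floorLogWeight

/-- For prime `b`, `N = b^m`, `α > 1`:
`Σ_{k ≥ 1, N ∣ k} b^{-α⌊log_b k⌋} = μ(α)/b^{mα} ≤ μ(α)/N`. -/
theorem sum_over_multiples (b m : ℕ) (hb : Nat.Prime b) (α : ℝ) (hα : 1 < α) :
    (∑' k : ℕ, if k ≠ 0 ∧ b ^ m ∣ k then (b : ℝ) ^ (-(α * (Nat.log b k : ℝ))) else 0)
        = mu b α / (b : ℝ) ^ ((m : ℝ) * α) ∧
      (∑' k : ℕ, if k ≠ 0 ∧ b ^ m ∣ k then (b : ℝ) ^ (-(α * (Nat.log b k : ℝ))) else 0)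
        ≤ mu b α / (b : ℝ) ^ (m : ℕ) := by
  have hb' : (1 : ℝ) < b := by exact_mod_cast hb.one_lt
  have hsum : (∑' k : ℕ, if k ≠ 0 ∧ b ^ m ∣ k then (b : ℝ) ^ (-(α * (Nat.log b k : ℝ))) else 0)
      = mu b α / (b : ℝ) ^ ((m : ℝ) * α) := by
    convert (floorLogWeight.hasSum_multiples hb.one_lt hα m).tsum_eq using 3 with k
    by_cases hk : k = 0 <;> simp [floorLogWeight, hk]
  have hmu : 0 ≤ mu b α := (floorLogWeight.hasSum_mu hb.one_lt hα).nonneg floorLogWeight.nonneg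
  refine ⟨hsum, hsum ▸ div_le_div_of_nonneg_left hmu (by positivity) ?_⟩
  rw [← Real.rpow_natCast]
  exact Real.rpow_le_rpow_of_exponent_le hb'.le (le_mul_of_one_le_right m.cast_nonneg hα.le)
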